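/- For every ε ∈ (0,1], q ∈ [1,∞), and x ∈ ℝ^p, the εq-norm satisfies ‖x‖_∞ ≤ ‖x‖_{εq} ≤ p^{1/q} ‖x‖_∞ / (p^{1/q}(1−ε) + ε), where ‖x‖_∞ = max_i |x_i|. Moreover both inequalities are attained: the lower bound holds with equality when x is a standard unit vector, and the upper bound holds with equality when x is the all-ones vector. -/

import Mathlib

/-- The supremum (ℓ_∞) norm on `ℝ^p`. -/
noncomputable def linfNorm (p : ℕ) (x : Fin p → ℝ) : ℝ :=
  ⨆ i : Fin p, |x i|

/-!
Write `v` for the εq-norm of `x`, `M = ‖x‖_∞` and `P = p^{1/q}`. Each summand of the defining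
equation is at most `(εv)^q`, which forces `|x_i| ≤ v`. Bounding every summand by the largest one
gives `εv ≤ P (M - (1-ε)v)_+`, which rearranges to `v (P(1-ε) + ε) ≤ P M`; when all `|x_i|` equal
`M` this is an equality. For a unit vector only one summand survives, and it forces `v = 1`.
-/

open Finset

section linfNorm

variable {p : ℕ}

lemma abs_le_linfNorm (x : Fin p → ℝ) (i : Fin p) : |x i| ≤ linfNorm p x :=
  le_ciSup (Set.finite_range fun j => |x j|).bddAbove i

lemma linfNorm_nonneg (x : Fin p → ℝ) : 0 ≤ linfNorm p x :=
  Real.iSup_nonneg fun i => abs_nonneg (x i)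

lemma linfNorm_const [Nonempty (Fin p)] (c : ℝ) : linfNorm p (fun _ => c) = |c| :=
  ciSup_const

lemma linfNorm_single (i : Fin p) : linfNorm p (Pi.single i 1) = 1 := by
  refine le_antisymm (Real.iSup_le (fun j => ?_) zero_le_one) ?_
  · rcases eq_or_ne j i with rfl | hji
    · simp
    · simp [Pi.single_eq_of_ne hji]
  · simpa using abs_le_linfNorm (Pi.single i (1 : ℝ)) i

end linfNorm

lemma sum_const_rpow_eq {p : ℕ} {q : ℝ} (hq : q ≠ 0) {a : ℝ} (ha : 0 ≤ a) :
    ∑ _i : Fin p, a ^ q = ((p : ℝ) ^ (1 / q) * a) ^ q := by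
  rw [Real.mul_rpow (by positivity) ha, ← Real.rpow_mul p.cast_nonneg, one_div,
    inv_mul_cancel₀ hq, Real.rpow_one, sum_const, card_univ, Fintype.card_fin, nsmul_eq_mul]

lemma sum_rpow_le {p : ℕ} {q : ℝ} (hq : 0 < q) {f : Fin p → ℝ} {a : ℝ} (hf : ∀ i, 0 ≤ f i)
    (hfa : ∀ i, f i ≤ a) (ha : 0 ≤ a) : ∑ i, f i ^ q ≤ ((p : ℝ) ^ (1 / q) * a) ^ q := by
  rw [← sum_const_rpow_eq hq.ne' ha]
  exact sum_le_sum fun i _ => Real.rpow_le_rpow (hf i) (hfa i) hq.le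

def IsEpsqNorm {p : ℕ} (ε q : ℝ) (x : Fin p → ℝ) (v : ℝ) : Prop :=
  0 ≤ v ∧ ∑ i, (max (|x i| - (1 - ε) * v) 0) ^ q = (ε * v) ^ q

namespace IsEpsqNorm

variable {p : ℕ} {ε q v : ℝ} {x : Fin p → ℝ}

lemma abs_le (hε : 0 < ε) (hq : 0 < q) (hv : IsEpsqNorm ε q x v) (i : Fin p) : |x i| ≤ v := by
  by_contra! hlt
  have hterm : (ε * v) ^ q < (max (|x i| - (1 - ε) * v) 0) ^ q :=
    Real.rpow_lt_rpow (by nlinarith [hv.1]) (lt_max_of_lt_left (by linarith)) hq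
  have hsum : (max (|x i| - (1 - ε) * v) 0) ^ q ≤ (ε * v) ^ q :=
    hv.2 ▸ single_le_sum (f := fun j => (max (|x j| - (1 - ε) * v) 0) ^ q)
      (fun j _ => Real.rpow_nonneg (le_max_right _ _) q) (mem_univ i)
  exact hterm.not_ge hsum

lemma linfNorm_le (hε : 0 < ε) (hq : 0 < q) (hv : IsEpsqNorm ε q x v) : linfNorm p x ≤ v :=
  Real.iSup_le (hv.abs_le hε hq) hv.1

lemma mul_le_root_mul_max (hε : 0 < ε) (hq : 0 < q) (hv : IsEpsqNorm ε q x v) :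
    ε * v ≤ (p : ℝ) ^ (1 / q) * max (linfNorm p x - (1 - ε) * v) 0 := by
  have hpow : (ε * v) ^ q ≤ ((p : ℝ) ^ (1 / q) * max (linfNorm p x - (1 - ε) * v) 0) ^ q :=
    hv.2 ▸ sum_rpow_le hq (fun i => le_max_right _ _)
      (fun i => max_le_max_right 0 (by linarith [abs_le_linfNorm x i])) (le_max_right _ _)
  exact (Real.rpow_le_rpow_iff (by nlinarith [hv.1]) (by positivity) hq).mp hpow

lemma mul_eq_root_mul_max (hε : 0 ≤ ε) (hq : 0 < q) (hv : IsEpsqNorm ε q x v)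
    (hx : ∀ i, |x i| = linfNorm p x) :
    ε * v = (p : ℝ) ^ (1 / q) * max (linfNorm p x - (1 - ε) * v) 0 := by
  have hpow : (ε * v) ^ q = ((p : ℝ) ^ (1 / q) * max (linfNorm p x - (1 - ε) * v) 0) ^ q := by
    rw [← hv.2, ← sum_const_rpow_eq hq.ne' (le_max_right _ _)]
    simp only [hx]
  exact (Real.rpow_left_inj (mul_nonneg hε hv.1) (by positivity) hq.ne').mp hpow

lemma le_div (hε0 : 0 < ε) (hε1 : ε ≤ 1) (hq : 0 < q) (hv : IsEpsqNorm ε q x v) :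
    v ≤ (p : ℝ) ^ (1 / q) * linfNorm p x / ((p : ℝ) ^ (1 / q) * (1 - ε) + ε) := by
  set P := (p : ℝ) ^ (1 / q)
  have hP : 0 ≤ P := by positivity
  have hD : 0 < P * (1 - ε) + ε := by nlinarith
  rw [le_div_iff₀ hD]
  have key := hv.mul_le_root_mul_max hε0 hq
  rcases le_total (linfNorm p x - (1 - ε) * v) 0 with hneg | hpos
  · have hv0 : v = 0 := by
      rw [max_eq_right hneg, mul_zero] at key
      nlinarith [hv.1]
    simpa [hv0] using mul_nonneg hP (linfNorm_nonneg x)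
  · rw [max_eq_left hpos] at key
    linarith

lemma eq_div (hε0 : 0 < ε) (hε1 : ε ≤ 1) (hq : 0 < q) (hv : IsEpsqNorm ε q x v)
    (hx : ∀ i, |x i| = linfNorm p x) :
    v = (p : ℝ) ^ (1 / q) * linfNorm p x / ((p : ℝ) ^ (1 / q) * (1 - ε) + ε) := by
  set P := (p : ℝ) ^ (1 / q)
  have hP : 0 ≤ P := by positivity
  have hD : 0 < P * (1 - ε) + ε := by nlinarith
  refine le_antisymm (hv.le_div hε0 hε1 hq) ((div_le_iff₀ hD).mpr ?_)
  have key := hv.mul_eq_root_mul_max hε0.le hq hx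
  nlinarith [mul_le_mul_of_nonneg_left (le_max_left (linfNorm p x - (1 - ε) * v) 0) hP]

lemma eq_one_of_single (hε0 : 0 < ε) (hε1 : ε ≤ 1) (hq : 0 < q) {i : Fin p}
    (hv : IsEpsqNorm ε q (Pi.single i 1) v) : v = 1 := by
  have hv1 : 1 ≤ v := by simpa using hv.abs_le hε0 hq i
  have hsum : ∑ j, (max (|(Pi.single i 1 : Fin p → ℝ) j| - (1 - ε) * v) 0) ^ q
      = (max (1 - (1 - ε) * v) 0) ^ q := by
    rw [sum_eq_single i (fun j _ hji => ?_) (fun hi => absurd (mem_univ i) hi)]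
    · simp
    · rw [Pi.single_eq_of_ne hji, abs_zero, zero_sub, max_eq_right (by nlinarith),
        Real.zero_rpow hq.ne']
  have heq : max (1 - (1 - ε) * v) 0 = ε * v :=
    (Real.rpow_left_inj (le_max_right _ _) (by nlinarith) hq.ne').mp (hsum.symm.trans hv.2)
  rcases le_total (1 - (1 - ε) * v) 0 with hneg | hpos
  · rw [max_eq_right hneg] at heq
    nlinarith
  · rw [max_eq_left hpos] at heq
    linarith

end IsEpsqNorm

/-- Let `N` be the εq-norm.  Then
`‖x‖_∞ ≤ N x ≤ p^{1/q} ‖x‖_∞ / (p^{1/q}(1-ε)+ε)` for all `x`, the lower bound is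
attained at every standard unit vector, and the upper bound is attained at the
all-ones vector. -/
theorem epsq_norm_linf_bounds (p : ℕ) (ε q : ℝ)
    (hε0 : 0 < ε) (hε1 : ε ≤ 1) (hq : 1 ≤ q)
    (N : (Fin p → ℝ) → ℝ)
    (hN0 : ∀ x : Fin p → ℝ, 0 ≤ N x)
    (hNeq : ∀ x : Fin p → ℝ,
      ∑ i : Fin p, (max (|x i| - (1 - ε) * N x) 0) ^ q = (ε * N x) ^ q) :
    (∀ x : Fin p → ℝ,
      linfNorm p x ≤ N x ∧
      N x ≤ (p : ℝ) ^ (1 / q) * linfNorm p x / ((p : ℝ) ^ (1 / q) * (1 - ε) + ε)) ∧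
    (∀ i : Fin p, N (Pi.single i 1) = linfNorm p (Pi.single i 1)) ∧
    (N (fun _ => 1) =
      (p : ℝ) ^ (1 / q) * linfNorm p (fun _ => 1) /
        ((p : ℝ) ^ (1 / q) * (1 - ε) + ε)) := by
  have hq0 : 0 < q := zero_lt_one.trans_le hq
  have hN : ∀ x, IsEpsqNorm ε q x (N x) := fun x => ⟨hN0 x, hNeq x⟩
  refine ⟨fun x => ⟨(hN x).linfNorm_le hε0 hq0, (hN x).le_div hε0 hε1 hq0⟩,
    fun i => by rw [linfNorm_single, (hN _).eq_one_of_single hε0 hε1 hq0], ?_⟩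
  refine (hN _).eq_div hε0 hε1 hq0 fun i => ?_
  have : Nonempty (Fin p) := ⟨i⟩
  rw [linfNorm_const]
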